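/- Let p be an odd prime and let i be a nonnegative integer. Then St^{(i,0)}(Q_{2,1}) = Q_{2,1}^p if i = p²−p; St^{(i,0)}(Q_{2,1}) = (−1)^k·C(k+1,r)·Q_{2,0}^{r}·Q_{2,1}^{k+1−r} if i = kp+r with integers 0 ≤ r < p, 0 ≤ k and r ≤ k+1 ≤ p; and St^{(i,0)}(Q_{2,1}) = 0 otherwise. (Here C(k+1,r) denotes the binomial coefficient reduced mod p; the two listed cases agree when both apply.) -/

import Mathlib

open MvPolynomial Finset

/-- The total Steenrod-Milnor operation `φ : R → R[t₁,t₂]`,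
sending `y_k ↦ y_k + y_k^p t₁ + y_k^{p²} t₂`. Here `R = F_p[y₁,y₂]`
and `R[t₁,t₂]` is modelled as `MvPolynomial (Fin 2) R`. -/
noncomputable def phi (p : ℕ) :
    MvPolynomial (Fin 2) (ZMod p) →ₐ[ZMod p]
      MvPolynomial (Fin 2) (MvPolynomial (Fin 2) (ZMod p)) :=
  aeval (fun k => C (X k) + C (X k ^ p) * X 0 + C (X k ^ (p ^ 2)) * X 1)

/-- The Steenrod-Milnor operation `St^{(i,j)}` : the coefficient of
`t₁^i t₂^j` in `φ f`. -/
noncomputable def St (p i j : ℕ) (f : MvPolynomial (Fin 2) (ZMod p)) :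
    MvPolynomial (Fin 2) (ZMod p) :=
  coeff (Finsupp.single (0 : Fin 2) i + Finsupp.single (1 : Fin 2) j) (phi p f)

/-- `L₂ = y₁ y₂^p - y₁^p y₂`. -/
noncomputable def L2 (p : ℕ) : MvPolynomial (Fin 2) (ZMod p) :=
  X 0 * X 1 ^ p - X 0 ^ p * X 1

/-- `L_{2,0} = y₁^p y₂^{p²} - y₁^{p²} y₂^p`. -/
noncomputable def L20 (p : ℕ) : MvPolynomial (Fin 2) (ZMod p) :=
  X 0 ^ p * X 1 ^ (p ^ 2) - X 0 ^ (p ^ 2) * X 1 ^ p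

/-- `L_{2,1} = y₁ y₂^{p²} - y₁^{p²} y₂`. -/
noncomputable def L21 (p : ℕ) : MvPolynomial (Fin 2) (ZMod p) :=
  X 0 * X 1 ^ (p ^ 2) - X 0 ^ (p ^ 2) * X 1


/-! Put `ψ(f) = f(y + yᵖ t) = ∑ᵢ St^{(i,0)}(f) tⁱ`, a ring homomorphism `R → R[t]`. The Moore
determinants `M(a,b) = y₁^{p^a} y₂^{p^b} - y₁^{p^b} y₂^{p^a}` satisfy
`ψ M(a,b) = M(a,b) + M(a+1,b) t^{p^a} + M(a,b+1) t^{p^b} + M(a+1,b+1) t^{p^a+p^b}`, and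
`L₂ = M(0,1)`, `L_{2,1} = M(0,2)`, `L_{2,0} = M(1,2) = L₂ᵖ`. With `N = Q_{2,0} t + Q_{2,1}` this gives
`ψ L₂ = L₂ (1 + N tᵖ)`. A Plücker relation gives `M(0,3) = (Q_{2,1}^{p+1} - Q_{2,0}ᵖ) L₂`, so
`ψ L_{2,1}` is also `L₂` times a polynomial in `N`, and dividing, using `Nᵖ = Q_{2,1}ᵖ + Q_{2,0}ᵖ tᵖ`,
`ψ Q_{2,1} = ∑_{m < p-1} (-1)ᵐ N^{m+1} t^{pm} + Q_{2,1}ᵖ t^{p(p-1)}`.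
Every summand has `t`-degree `< p`, so the coefficient of `t^{kp+r}`, `r < p`, is read off from the
binomial expansion of `N^{k+1}`; for `k = p - 1` it matches since `p ∣ C(p,r)` for `0 < r < p`. -/

namespace Polynomial

theorem coeff_C_mul_X_add_C_pow {R : Type*} [CommSemiring R] (a b : R) (n k : ℕ) :
    ((C a * X + C b) ^ n).coeff k = n.choose k * a ^ k * b ^ (n - k) := by
  have : (C a * X + C b) ^ n = ((X + C b) ^ n).comp (C a * X) := by
    simp [pow_comp]
  rw [this, comp_C_mul_X_coeff, coeff_X_add_C_pow]
  ring

theorem coeff_sum_mul_X_pow_mul {R : Type*} [Semiring R] {P : ℕ → R[X]} {n p : ℕ}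
    (hP : ∀ m < n, (P m).degree < p) {r : ℕ} (hr : r < p) (k : ℕ) :
    (∑ m ∈ range n, P m * X ^ (p * m)).coeff (p * k + r) =
      if k < n then (P k).coeff r else 0 := by
  have hoff : ∀ m ∈ range n, m ≠ k → (P m * X ^ (p * m)).coeff (p * k + r) = 0 := by
    intro m hm hmk
    rw [coeff_mul_X_pow']
    rcases Nat.lt_or_gt_of_ne hmk with hlt | hgt
    · have : p * m + p ≤ p * k := by nlinarith
      rw [if_pos (by omega)]
      refine coeff_eq_zero_of_degree_lt ((hP m (mem_range.mp hm)).trans_le ?_)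
      exact_mod_cast (by omega : p ≤ p * k + r - p * m)
    · have : p * k + p ≤ p * m := by nlinarith
      rw [if_neg (by omega)]
  rw [finsetSum_coeff]
  split_ifs with hk
  · rw [sum_eq_single_of_mem k (mem_range.mpr hk) hoff, add_comm, coeff_mul_X_pow]
  · exact sum_eq_zero fun m hm => hoff m hm (by rintro rfl; exact hk (mem_range.mp hm))

noncomputable def totalStQ21 (p : ℕ) {A : Type*} [CommRing A] (a b : A) : A[X] :=
  ∑ m ∈ range (p - 1), C ((-1) ^ m) * (C a * X + C b) ^ (m + 1) * X ^ (p * m)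
    + C (b ^ p) * X ^ (p * (p - 1))

theorem totalStQ21_mul {A : Type*} [CommRing A] {p : ℕ} [Fact p.Prime] [CharP A p]
    (hodd : Odd p) (a b : A) :
    totalStQ21 p a b * (1 + (C a * X + C b) * X ^ p) =
      C a * X + C b + (C (b ^ p) * (C a * X + C b) - C (a ^ p)) * X ^ (p ^ 2) := by
  rw [totalStQ21]
  set N := C a * X + C b
  have hsum : ∑ m ∈ range (p - 1), C ((-1 : A) ^ m) * N ^ (m + 1) * X ^ (p * m) =
      N * ∑ m ∈ range (p - 1), (-(N * X ^ p)) ^ m := by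
    rw [mul_sum]
    refine sum_congr rfl fun m _ => ?_
    rw [neg_pow (N * X ^ p), mul_pow, ← pow_mul, map_pow, map_neg, map_one]
    ring
  have hfrob : N ^ p = C (b ^ p) + C (a ^ p) * X ^ p := by
    rw [add_pow_char, mul_pow, C_pow, C_pow, add_comm]
  have hgeom_sum : (∑ m ∈ range (p - 1), (-(N * X ^ p)) ^ m) * (1 + N * X ^ p) =
      1 - (N * X ^ p) ^ (p - 1) := by
    rw [← sub_neg_eq_add, geom_sum_mul_neg, (Nat.Odd.sub_odd hodd odd_one).neg_pow]
  clear_value N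
  rw [hsum, add_mul, mul_assoc, hgeom_sum]
  obtain ⟨q, rfl⟩ : ∃ q, p = q + 1 :=
    ⟨p - 1, (Nat.sub_add_cancel (Fact.out : p.Prime).pos).symm⟩
  rw [Nat.add_sub_cancel]
  linear_combination (-X ^ ((q + 1) * q)) * hfrob

theorem coeff_totalStQ21 {A : Type*} [CommRing A] {p : ℕ} [Fact p.Prime] [CharP A p]
    (hodd : Odd p) (a b : A) {r : ℕ} (hr : r < p) (k : ℕ) :
    (totalStQ21 p a b).coeff (p * k + r) =
      if k < p then (-1) ^ k * (k + 1).choose r * a ^ r * b ^ (k + 1 - r) else 0 := by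
  have hdeg : ∀ m < p - 1,
      (C ((-1 : A) ^ m) * (C a * X + C b) ^ (m + 1)).degree < (p : WithBot ℕ) := by
    refine fun m hm => (degree_lt_iff_coeff_zero _ _).mpr fun j hj => ?_
    rw [coeff_C_mul, coeff_C_mul_X_add_C_pow, Nat.choose_eq_zero_of_lt (by omega)]
    simp
  unfold totalStQ21
  rw [coeff_add, coeff_sum_mul_X_pow_mul hdeg hr, coeff_C_mul_X_pow]
  rcases lt_trichotomy k (p - 1) with hk | rfl | hk
  · rw [if_pos hk, if_neg (by nlinarith), if_pos (by omega), add_zero, coeff_C_mul,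
      coeff_C_mul_X_add_C_pow]
    ring
  · have hp := (Fact.out : p.Prime).pos
    rw [if_neg (lt_irrefl _), zero_add, if_pos (show p - 1 < p by omega), Nat.sub_add_cancel hp]
    rcases r.eq_zero_or_pos with rfl | hr0
    · simp [(Nat.Odd.sub_odd hodd odd_one).neg_one_pow]
    · rw [if_neg (by omega), (CharP.cast_eq_zero_iff A p _).mpr
        ((Fact.out : p.Prime).dvd_choose_self hr0.ne' hr)]
      simp
  · rw [if_neg (by omega), if_neg (by nlinarith), if_neg (by omega), add_zero]

end Polynomial

noncomputable def evalSndZero (S : Type*) [CommSemiring S] :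
    MvPolynomial (Fin 2) S →+* Polynomial S :=
  eval₂Hom Polynomial.C ![Polynomial.X, 0]

theorem coeff_evalSndZero {S : Type*} [CommSemiring S] (g : MvPolynomial (Fin 2) S) (i : ℕ) :
    (evalSndZero S g).coeff i = g.coeff (Finsupp.single 0 i) := by
  induction g using MvPolynomial.induction_on' with
  | monomial u a =>
    obtain ⟨m, n, rfl⟩ : ∃ m n, u = Finsupp.single 0 m + Finsupp.single 1 n :=
      ⟨u 0, u 1, by ext j; fin_cases j <;> simp⟩
    rcases n.eq_zero_or_pos with rfl | hn
    · simp [evalSndZero, eval₂_monomial, coeff_monomial, (Finsupp.single_injective _).eq_iff,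
        eq_comm]
    · rw [coeff_monomial, if_neg fun h => by simpa [hn.ne'] using congr($h 1)]
      simp [evalSndZero, hn.ne']
  | add f g hf hg => simp only [map_add, Polynomial.coeff_add, coeff_add, hf, hg]

noncomputable def psi (p : ℕ) :
    MvPolynomial (Fin 2) (ZMod p) →+* Polynomial (MvPolynomial (Fin 2) (ZMod p)) :=
  (evalSndZero _).comp (phi p).toRingHom

theorem St_zero_eq_coeff_psi (p i : ℕ) (f : MvPolynomial (Fin 2) (ZMod p)) :
    St p i 0 f = (psi p f).coeff i := by
  rw [St, Finsupp.single_zero, add_zero, psi, RingHom.comp_apply, coeff_evalSndZero]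
  rfl

theorem psi_X (p : ℕ) (k : Fin 2) :
    psi p (X k) = Polynomial.C (X k) + Polynomial.C (X k ^ p) * Polynomial.X := by
  simp [psi, phi, evalSndZero]

theorem coeff_zero_psi {p : ℕ} (f : MvPolynomial (Fin 2) (ZMod p)) : (psi p f).coeff 0 = f := by
  have : Polynomial.constantCoeff.comp (psi p) = RingHom.id _ := by
    ext k <;> simp [psi, phi, evalSndZero]
  exact congr($this f)

noncomputable def moore (p a b : ℕ) : MvPolynomial (Fin 2) (ZMod p) :=
  X 0 ^ p ^ a * X 1 ^ p ^ b - X 0 ^ p ^ b * X 1 ^ p ^ a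

theorem moore_self (p a : ℕ) : moore p a a = 0 := sub_self _

theorem moore_plucker (p a b c d : ℕ) :
    moore p a d * moore p b c = moore p a c * moore p b d - moore p a b * moore p c d := by
  simp only [moore]; ring

theorem L2_eq_moore (p : ℕ) : L2 p = moore p 0 1 := by simp [L2, moore]

theorem L20_eq_moore (p : ℕ) : L20 p = moore p 1 2 := by simp [L20, moore]

theorem L21_eq_moore (p : ℕ) : L21 p = moore p 0 2 := by simp [L21, moore]

section CharP

variable {p : ℕ} [Fact p.Prime]

theorem moore_succ_succ (a b : ℕ) : moore p (a + 1) (b + 1) = moore p a b ^ p := by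
  simp only [moore, sub_pow_char, mul_pow, ← pow_mul, pow_succ]

theorem psi_X_pow_pow (k : Fin 2) (a : ℕ) :
    psi p (X k ^ p ^ a) =
      Polynomial.C (X k ^ p ^ a) + Polynomial.C (X k ^ p ^ (a + 1)) * Polynomial.X ^ p ^ a := by
  rw [map_pow, psi_X, add_pow_char_pow, mul_pow, ← Polynomial.C_pow, ← Polynomial.C_pow,
    ← pow_mul, ← pow_succ']

theorem psi_moore (a b : ℕ) :
    psi p (moore p a b) =
      Polynomial.C (moore p a b) + Polynomial.C (moore p (a + 1) b) * Polynomial.X ^ p ^ a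
        + Polynomial.C (moore p a (b + 1)) * Polynomial.X ^ p ^ b
        + Polynomial.C (moore p (a + 1) (b + 1)) * Polynomial.X ^ (p ^ a + p ^ b) := by
  simp only [moore, map_sub, map_mul, psi_X_pow_pow, pow_add]
  ring

theorem L2_ne_zero : L2 p ≠ 0 := by
  intro h
  have := congrArg (aeval ![(1 : Polynomial (ZMod p)), Polynomial.X]) h
  simp [L2] at this
  exact FiniteField.X_pow_card_sub_X_ne_zero _ (Fact.out : p.Prime).one_lt
    (by linear_combination this)

theorem L20_eq_L2_pow : L20 p = L2 p ^ p := by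
  rw [L20_eq_moore, L2_eq_moore, moore_succ_succ]

variable {Q0 Q1 : MvPolynomial (Fin 2) (ZMod p)}

theorem psi_L2_eq (hQ0 : Q0 * L2 p = L20 p) (hQ1 : Q1 * L2 p = L21 p) :
    psi p (L2 p) = Polynomial.C (L2 p) *
      (1 + (Polynomial.C Q0 * Polynomial.X + Polynomial.C Q1) * Polynomial.X ^ p) := by
  rw [L2_eq_moore, psi_moore, moore_self, ← L21_eq_moore, ← L20_eq_moore, ← hQ0, ← hQ1,
    L2_eq_moore]
  simp only [map_mul, map_zero]
  ring

theorem moore_zero_three_eq (hQ0 : Q0 * L2 p = L20 p) (hQ1 : Q1 * L2 p = L21 p) :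
    moore p 0 3 = (Q1 ^ (p + 1) - Q0 ^ p) * L2 p := by
  have hQ0' : Q0 * L2 p = L2 p ^ p := by rw [hQ0, L20_eq_L2_pow]
  have hplucker := moore_plucker p 0 1 2 3
  rw [moore_succ_succ 1 2, moore_succ_succ 0 2, moore_succ_succ 0 1, ← L2_eq_moore,
    ← L21_eq_moore, ← hQ1, ← hQ0'] at hplucker
  refine mul_right_cancel₀ (pow_ne_zero p (L2_ne_zero (p := p))) ?_
  linear_combination hplucker - moore p 0 3 * hQ0'

theorem psi_L21_eq (hQ0 : Q0 * L2 p = L20 p) (hQ1 : Q1 * L2 p = L21 p) :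
    psi p (L21 p) = Polynomial.C (L2 p) *
      (Polynomial.C Q0 * Polynomial.X + Polynomial.C Q1 +
        (Polynomial.C (Q1 ^ p) * (Polynomial.C Q0 * Polynomial.X + Polynomial.C Q1)
          - Polynomial.C (Q0 ^ p)) * Polynomial.X ^ (p ^ 2)) := by
  have hQ0' : Q0 * L2 p = L2 p ^ p := by rw [hQ0, L20_eq_L2_pow]
  rw [L21_eq_moore, psi_moore, moore_succ_succ 0 2, moore_zero_three_eq hQ0 hQ1, ← L21_eq_moore,
    ← L20_eq_moore, ← hQ0, ← hQ1, mul_pow, ← hQ0']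
  simp only [map_mul, map_sub, map_pow]
  ring

theorem psi_Q21_eq (hodd : Odd p) (hQ0 : Q0 * L2 p = L20 p) (hQ1 : Q1 * L2 p = L21 p) :
    psi p Q1 = Polynomial.totalStQ21 p Q0 Q1 := by
  have hL2 : psi p (L2 p) ≠ 0 := fun h => L2_ne_zero (by rw [← coeff_zero_psi (L2 p), h]; rfl)
  refine mul_right_cancel₀ hL2 ?_
  rw [← map_mul, hQ1, psi_L21_eq hQ0 hQ1, psi_L2_eq hQ0 hQ1, mul_left_comm,
    Polynomial.totalStQ21_mul hodd]

end CharP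

theorem st_i0_Q21 (p : ℕ) (hp : p.Prime) (hodd : Odd p)
    (Q0 Q1 : MvPolynomial (Fin 2) (ZMod p))
    (hQ0 : Q0 * L2 p = L20 p) (hQ1 : Q1 * L2 p = L21 p)
    (i : ℕ) :
    (i = p ^ 2 - p → St p i 0 Q1 = Q1 ^ p) ∧
    (∀ k r : ℕ, r < p → r ≤ k + 1 → k + 1 ≤ p → i = k * p + r →
      St p i 0 Q1 = (-1 : MvPolynomial (Fin 2) (ZMod p)) ^ k *
        C (((k + 1).choose r : ZMod p)) * Q0 ^ r * Q1 ^ (k + 1 - r)) ∧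
    ((i ≠ p ^ 2 - p ∧ ∀ k r : ℕ, r < p → r ≤ k + 1 → k + 1 ≤ p → i ≠ k * p + r) →
      St p i 0 Q1 = 0) := by
  have : Fact p.Prime := ⟨hp⟩
  have hSt : ∀ k r, r < p → St p (k * p + r) 0 Q1 = if k < p then
      (-1) ^ k * C (((k + 1).choose r : ZMod p)) * Q0 ^ r * Q1 ^ (k + 1 - r) else 0 := by
    intro k r hr
    rw [St_zero_eq_coeff_psi, psi_Q21_eq hodd hQ0 hQ1, mul_comm k,
      Polynomial.coeff_totalStQ21 hodd _ _ hr, map_natCast]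
  have hdigits : ∀ k r : ℕ, r < p → r ≤ k + 1 → k + 1 ≤ p → i = k * p + r →
      St p i 0 Q1 = (-1 : MvPolynomial (Fin 2) (ZMod p)) ^ k *
        C (((k + 1).choose r : ZMod p)) * Q0 ^ r * Q1 ^ (k + 1 - r) := by
    rintro k r hr - hk rfl
    rw [hSt k r hr, if_pos (by omega)]
  refine ⟨fun hi => ?_, hdigits, fun ⟨_, hne⟩ => ?_⟩
  · have hi' : i = (p - 1) * p + 0 := by rw [hi, Nat.sub_mul, one_mul, sq, add_zero]
    rw [hdigits (p - 1) 0 hp.pos (Nat.zero_le _) (Nat.sub_add_cancel hp.pos).le hi',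
      Nat.sub_add_cancel hp.pos]
    simp [(Nat.Odd.sub_odd hodd odd_one).neg_one_pow]
  · have hr := Nat.mod_lt i hp.pos
    rw [← Nat.div_add_mod' i p, hSt _ _ hr]
    split_ifs with hk
    · have : i / p + 1 < i % p := by
        by_contra! h
        exact hne _ _ hr h hk (Nat.div_add_mod' i p).symm
      simp [Nat.choose_eq_zero_of_lt this]
    · rfl
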